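/- arXiv:1009.5386 — 2 statements merged into one kernel-verified Lean document; each statement's English description precedes it below -/
import Mathlib

section
/- Fix an integer n ≥ 0. The integer triples (m,o,p) simultaneously satisfying −2p(o−p)=2, p(np−n−2m+2p)=2, and p(2no−np+n−2m+2p)=2 are exactly: (m,o,p)=(0,0,1), together with (m,o,p)=(0,0,−1) in the case n=0 only. -/
/-!
The first equation says `p (p - o) = 1`, so `p = ±1` and `o = 0`. The difference of the other
two is `2 n p (o - p + 1) = 0`, which for `p = -1` forces `n = 0`; either remaining equation
then gives `m = 0`.
-/

theorem Int.eq_one_or_eq_neg_one_and_eq_zero_of_mul_sub_eq_one {p o : ℤ}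
    (h : p * (p - o) = 1) : (p = 1 ∨ p = -1) ∧ o = 0 := by
  obtain hp | hp := Int.eq_one_or_neg_one_of_mul_eq_one h <;> subst hp
  · exact ⟨Or.inl rfl, by linarith⟩
  · exact ⟨Or.inr rfl, by linarith⟩

theorem Fn_P1_intersection_solutions_general (n : ℤ) :
    ∀ m o p : ℤ,
      (-2 * p * (o - p) = 2 ∧ p * (n * p - n - 2 * m + 2 * p) = 2 ∧
        p * (2 * n * o - n * p + n - 2 * m + 2 * p) = 2) ↔
      ((m, o, p) = (0, 0, 1) ∨ (n = 0 ∧ (m, o, p) = (0, 0, -1))) := by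
  intro m o p
  constructor
  · rintro ⟨h₁, h₂, h₃⟩
    obtain ⟨rfl | rfl, rfl⟩ :=
      Int.eq_one_or_eq_neg_one_and_eq_zero_of_mul_sub_eq_one (p := p) (o := o) (by linarith)
    · have hm : m = 0 := by linarith
      simp [hm]
    · have hn : n = 0 := by linarith
      have hm : m = 0 := by linarith
      simp [hn, hm]
  · rintro (h | ⟨rfl, h⟩) <;> simp only [Prod.mk.injEq] at h <;>
      obtain ⟨rfl, rfl, rfl⟩ := h <;> norm_num

theorem Fn_P1_intersection_solutions (n : ℤ) (hn : 0 ≤ n) :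
    ∀ m o p : ℤ,
      (-2 * p * (o - p) = 2 ∧ p * (n * p - n - 2 * m + 2 * p) = 2 ∧
        p * (2 * n * o - n * p + n - 2 * m + 2 * p) = 2) ↔
      ((m, o, p) = (0, 0, 1) ∨ (n = 0 ∧ (m, o, p) = (0, 0, -1))) :=
  Fn_P1_intersection_solutions_general n
end

section
/- The integer quadruples (m,n,o,p) simultaneously satisfying −2p(o−p)=2, p(2m−2n−2o+p+1)=2, and −p(2m−2n−p−1)=2 are exactly those with m=n, o=0, p=1. -/
theorem dP2_P1_intersection_solutions :
    ∀ m n o p : ℤ,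
      (-2 * p * (o - p) = 2 ∧ p * (2 * m - 2 * n - 2 * o + p + 1) = 2 ∧
        -p * (2 * m - 2 * n - p - 1) = 2) ↔
      (m = n ∧ o = 0 ∧ p = 1) := by
  intro m n o p
  constructor
  · rintro ⟨h₁, h₂, h₃⟩
    -- The first equation makes `p` a unit; once `p = ±1` the system is linear.
    have hp : p * (p - o) = 1 := mul_left_cancel₀ two_ne_zero (by linear_combination h₁)
    rcases Int.eq_one_or_neg_one_of_mul_eq_one hp with rfl | rfl
    · exact ⟨by linarith, by linarith, rfl⟩
    · exfalso
      linarith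
  · rintro ⟨rfl, rfl, rfl⟩
    norm_num
end
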